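/- For integers n ≥ d ≥ 1 and real x ≥ d, (d!/x^d) ∑_{1 ≤ j_1 < ... < j_d ≤ n} ∏_{r=0}^{d-1} (1 - (d-r)/x)^(j_{r+1}-j_r-1) = (1/x^n) ∑_{r=0}^{d} (-1)^r C(d,r) (x-r)^n, with j_0 = 0. -/

import Mathlib

/-!
Attach to the `r`-th gap of `j` the weight `c (d - r)`, with `c k = 1 - k / x`, and let
`S(d, n)` be the resulting gap sum. Sorting the sequences of `incSeqs (d + 1) (n + 1)` by whether
`j 1 = 1` (drop `j 1` and shift down) or not (shift everything down, which shortens the first gap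
and loses one factor `c (d + 1)`) gives `S(d + 1, n + 1) = S(d, n) + c (d + 1) S(d + 1, n)`.
The alternating sum `T(d, n) = ∑ (-1)^r C(d, r) (x - r)^n` obeys
`T(d + 1, n + 1) = (x - (d + 1)) T(d + 1, n) + (d + 1) T(d, n)`, because
`(d + 1 - r) C(d + 1, r) = (d + 1) C(d, r)`. Hence `d! x^n S(d, n)` and `x^d T(d, n)` satisfy the
same recursion with the same initial values, and induction on `n` identifies them.
-/

open scoped Classical

/-- Strictly increasing sequences `0 = j 0 < j 1 < ... < j d ≤ n`. -/
noncomputable def incSeqs (d n : ℕ) : Finset (Fin (d + 1) → ℕ) :=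
  (Fintype.piFinset fun _ => Finset.range (n + 1)).filter
    (fun j => j 0 = 0 ∧ StrictMono j ∧ j (Fin.last d) ≤ n)

open Finset

section IncSeqs

variable {d n : ℕ}

theorem mem_incSeqs {j : Fin (d + 1) → ℕ} :
    j ∈ incSeqs d n ↔ j 0 = 0 ∧ StrictMono j ∧ j (Fin.last d) ≤ n := by
  simp only [incSeqs, mem_filter, Fintype.mem_piFinset, mem_range, and_iff_right_iff_imp]
  exact fun h i => Nat.lt_succ_of_le ((h.2.1.monotone (Fin.le_last i)).trans h.2.2)

theorem incSeqs_zero_left (n : ℕ) : incSeqs 0 n = {0} := by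
  ext j
  rw [mem_incSeqs, mem_singleton, funext_iff, Fin.forall_fin_one]
  exact ⟨fun h => h.1,
    fun h => ⟨h, Subsingleton.strictMono (α := Fin 1) j, h.trans_le (Nat.zero_le n)⟩⟩

theorem incSeqs_succ_zero (d : ℕ) : incSeqs (d + 1) 0 = ∅ := by
  ext j
  simp only [mem_incSeqs, notMem_empty, iff_false, not_and, nonpos_iff_eq_zero]
  intro h0 hj hlast
  exact (hj (Fin.last_pos (n := d))).ne (h0.trans hlast.symm)

theorem exists_eq_cons_of_mem_incSeqs {j : Fin (d + 2) → ℕ} (hj : j ∈ incSeqs (d + 1) n) :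
    ∃ t, j = Fin.cons 0 t :=
  ⟨Fin.tail j, by rw [← (mem_incSeqs.1 hj).1, Fin.cons_self_tail]⟩

theorem cons_zero_mem_incSeqs {t : Fin (d + 1) → ℕ} :
    (Fin.cons 0 t : Fin (d + 2) → ℕ) ∈ incSeqs (d + 1) n ↔
      0 < t 0 ∧ StrictMono t ∧ t (Fin.last d) ≤ n := by
  rw [mem_incSeqs, Fin.strictMono_cons, Fin.cons_zero, Fin.cons_last]
  exact ⟨fun ⟨_, ⟨hpos, hmono⟩, hlast⟩ => ⟨hpos 0, hmono, hlast⟩,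
    fun ⟨hpos, hmono, hlast⟩ =>
      ⟨rfl, ⟨fun i => hpos.trans_le (hmono.monotone (Fin.zero_le i)), hmono⟩, hlast⟩⟩

theorem StrictMono.sub_one_of_pos {t : Fin (d + 1) → ℕ} (ht : StrictMono t) (h0 : 0 < t 0) :
    StrictMono (t - 1) := by
  intro a b hab
  have := ht hab
  have := h0.trans_le (ht.monotone (Fin.zero_le a))
  simp only [Pi.sub_apply, Pi.one_apply]
  omega

theorem StrictMono.sub_one_add_one_of_pos {t : Fin (d + 1) → ℕ} (ht : StrictMono t)
    (h0 : 0 < t 0) : t - 1 + 1 = t := by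
  funext i
  have := h0.trans_le (ht.monotone (Fin.zero_le i))
  simp only [Pi.add_apply, Pi.sub_apply, Pi.one_apply]
  omega

def gap {d : ℕ} (j : Fin (d + 1) → ℕ) (r : Fin d) : ℕ := j r.succ - j r.castSucc - 1

theorem gap_cons (a : ℕ) (t : Fin (d + 1) → ℕ) :
    gap (Fin.cons a t : Fin (d + 2) → ℕ) = Fin.cons (t 0 - a - 1) (gap t) := by
  funext r
  refine Fin.cases rfl (fun i => ?_) r
  simp only [gap, Fin.cons_succ, ← Fin.succ_castSucc]

theorem gap_add_one (t : Fin (d + 1) → ℕ) : gap (t + 1) = gap t := by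
  funext r
  simp only [gap, Pi.add_apply, Pi.one_apply]
  omega

section GapSum

variable {R : Type*}

-- Indexing the weight by `d - r`, the number of entries after the gap, makes the weights of the
-- later gaps survive the removal of `j 1`.
def gapWeight [CommMonoid R] (c : ℕ → R) {d : ℕ} (j : Fin (d + 1) → ℕ) : R :=
  ∏ r : Fin d, c (d - r) ^ gap j r

theorem gapWeight_cons [CommMonoid R] (c : ℕ → R) (a : ℕ) (t : Fin (d + 1) → ℕ) :
    gapWeight c (Fin.cons a t : Fin (d + 2) → ℕ) = c (d + 1) ^ (t 0 - a - 1) * gapWeight c t := by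
  simp [gapWeight, gap_cons, Fin.prod_univ_succ]

theorem gapWeight_add_one [CommMonoid R] (c : ℕ → R) (t : Fin (d + 1) → ℕ) :
    gapWeight c (t + 1) = gapWeight c t := by
  rw [gapWeight, gap_add_one, gapWeight]

variable [CommSemiring R] (c : ℕ → R)

noncomputable def gapSum (d n : ℕ) : R := ∑ j ∈ incSeqs d n, gapWeight c j

theorem gapSum_zero_left (n : ℕ) : gapSum c 0 n = 1 := by
  simp [gapSum, incSeqs_zero_left, gapWeight]

theorem gapSum_succ_zero (d : ℕ) : gapSum c (d + 1) 0 = 0 := by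
  simp [gapSum, incSeqs_succ_zero]

theorem gapSum_eq_sum_filter_eq_one (d n : ℕ) :
    gapSum c d n = ∑ j ∈ (incSeqs (d + 1) (n + 1)).filter (fun j => j 1 = 1), gapWeight c j := by
  refine sum_nbij' (fun k => Fin.cons 0 (k + 1)) (fun j => Fin.tail j - 1) ?_ ?_ ?_ ?_ ?_
  · intro k hk
    obtain ⟨h0, hmono, hlast⟩ := mem_incSeqs.1 hk
    refine mem_filter.2 ⟨cons_zero_mem_incSeqs.2 ⟨Nat.succ_pos _, hmono.add_const 1, ?_⟩, ?_⟩
    · simpa using hlast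
    · simp [h0]
  · intro j hj
    obtain ⟨hj, h1⟩ := mem_filter.1 hj
    obtain ⟨t, rfl⟩ := exists_eq_cons_of_mem_incSeqs hj
    obtain ⟨hpos, hmono, hlast⟩ := cons_zero_mem_incSeqs.1 hj
    rw [Fin.cons_one] at h1
    rw [Fin.tail_cons, mem_incSeqs]
    refine ⟨by simp [h1], hmono.sub_one_of_pos hpos, ?_⟩
    simp only [Pi.sub_apply, Pi.one_apply]
    omega
  · intro k _
    simp
  · intro j hj
    obtain ⟨hj, -⟩ := mem_filter.1 hj
    obtain ⟨t, rfl⟩ := exists_eq_cons_of_mem_incSeqs hj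
    obtain ⟨hpos, hmono, -⟩ := cons_zero_mem_incSeqs.1 hj
    rw [Fin.tail_cons, hmono.sub_one_add_one_of_pos hpos]
  · intro k hk
    simp [gapWeight_cons, gapWeight_add_one, (mem_incSeqs.1 hk).1]

theorem mul_gapSum_eq_sum_filter_ne_one (d n : ℕ) :
    c (d + 1) * gapSum c (d + 1) n =
      ∑ j ∈ (incSeqs (d + 1) (n + 1)).filter (fun j => ¬j 1 = 1), gapWeight c j := by
  rw [gapSum, mul_sum]
  refine sum_nbij' (fun k => Fin.cons 0 (Fin.tail k + 1)) (fun j => Fin.cons 0 (Fin.tail j - 1))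
    ?_ ?_ ?_ ?_ ?_
  · intro k hk
    obtain ⟨t, rfl⟩ := exists_eq_cons_of_mem_incSeqs hk
    obtain ⟨hpos, hmono, hlast⟩ := cons_zero_mem_incSeqs.1 hk
    refine mem_filter.2 ⟨cons_zero_mem_incSeqs.2 ⟨Nat.succ_pos _, hmono.add_const 1, ?_⟩, ?_⟩
    · simpa using hlast
    · simp only [Fin.tail_cons, Fin.cons_one, Pi.add_apply, Pi.one_apply]
      omega
  · intro j hj
    obtain ⟨hj, h1⟩ := mem_filter.1 hj
    obtain ⟨t, rfl⟩ := exists_eq_cons_of_mem_incSeqs hj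
    obtain ⟨hpos, hmono, hlast⟩ := cons_zero_mem_incSeqs.1 hj
    rw [Fin.cons_one] at h1
    rw [Fin.tail_cons, cons_zero_mem_incSeqs]
    refine ⟨?_, hmono.sub_one_of_pos hpos, ?_⟩ <;>
    · simp only [Pi.sub_apply, Pi.one_apply]
      omega
  · intro k hk
    obtain ⟨t, rfl⟩ := exists_eq_cons_of_mem_incSeqs hk
    simp
  · intro j hj
    obtain ⟨hj, -⟩ := mem_filter.1 hj
    obtain ⟨t, rfl⟩ := exists_eq_cons_of_mem_incSeqs hj
    obtain ⟨hpos, hmono, -⟩ := cons_zero_mem_incSeqs.1 hj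
    rw [Fin.tail_cons, Fin.tail_cons, hmono.sub_one_add_one_of_pos hpos]
  · intro k hk
    obtain ⟨t, rfl⟩ := exists_eq_cons_of_mem_incSeqs hk
    obtain ⟨hpos, -, -⟩ := cons_zero_mem_incSeqs.1 hk
    rw [Fin.tail_cons, gapWeight_cons, gapWeight_cons, gapWeight_add_one, ← mul_assoc, ← pow_succ']
    congr 2
    simp only [Pi.add_apply, Pi.one_apply]
    omega

theorem gapSum_succ_succ (d n : ℕ) :
    gapSum c (d + 1) (n + 1) = gapSum c d n + c (d + 1) * gapSum c (d + 1) n := by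
  rw [gapSum, ← sum_filter_add_sum_filter_not _ (fun j => j 1 = 1),
    ← gapSum_eq_sum_filter_eq_one, ← mul_gapSum_eq_sum_filter_ne_one]

end GapSum

end IncSeqs

section AltChooseSum

variable {R : Type*} [CommRing R]

def altChooseSum (x : R) (d n : ℕ) : R :=
  ∑ r ∈ range (d + 1), (-1) ^ r * (d.choose r : R) * (x - r) ^ n

theorem altChooseSum_zero_left (x : R) (n : ℕ) : altChooseSum x 0 n = x ^ n := by
  simp [altChooseSum]

theorem altChooseSum_succ_zero (x : R) (d : ℕ) : altChooseSum x (d + 1) 0 = 0 := by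
  simpa [altChooseSum] using
    congrArg (Int.cast : ℤ → R) (Int.alternating_sum_range_choose_of_ne d.succ_ne_zero)

theorem altChooseSum_succ_succ (x : R) (d n : ℕ) :
    altChooseSum x (d + 1) (n + 1) =
      (x - (d + 1)) * altChooseSum x (d + 1) n + (d + 1) * altChooseSum x d n := by
  have hterm : ∀ r ∈ range (d + 2), (-1) ^ r * ((d + 1).choose r : R) * (x - r) ^ (n + 1) =
      (x - (d + 1)) * ((-1) ^ r * ((d + 1).choose r : R) * (x - r) ^ n) +
        (d + 1) * ((-1) ^ r * (d.choose r : R) * (x - r) ^ n) := by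
    intro r hr
    have hchoose := congrArg (Nat.cast : ℕ → R) (Nat.choose_mul_succ_eq d r)
    push_cast [Nat.cast_sub (mem_range_succ_iff.1 hr)] at hchoose
    linear_combination -(-1) ^ r * (x - r) ^ n * hchoose
  rw [altChooseSum, sum_congr rfl hterm, sum_add_distrib, ← mul_sum, ← mul_sum,
    sum_range_succ (fun r => (-1) ^ r * (d.choose r : R) * (x - r) ^ n) (d + 1),
    Nat.choose_succ_self, Nat.cast_zero, mul_zero, zero_mul, add_zero]
  rfl

end AltChooseSum

theorem factorial_mul_pow_mul_gapSum {K : Type*} [Field K] {x : K} (hx : x ≠ 0) (d n : ℕ) :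
    (d.factorial : K) * x ^ n * gapSum (fun k => 1 - k / x) d n = x ^ d * altChooseSum x d n := by
  induction n generalizing d with
  | zero =>
    cases d with
    | zero => simp [gapSum_zero_left, altChooseSum_zero_left]
    | succ d => simp [gapSum_succ_zero, altChooseSum_succ_zero]
  | succ n ih =>
    cases d with
    | zero => simp [gapSum_zero_left, altChooseSum_zero_left]
    | succ d =>
      have hcoef : x * (1 - ((d + 1 : ℕ) : K) / x) = x - (d + 1) := by
        field_simp
        push_cast
        ring
      have ih₁ := ih d
      have ih₂ := ih (d + 1)
      rw [gapSum_succ_succ, altChooseSum_succ_succ, Nat.factorial_succ]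
      rw [Nat.factorial_succ] at ih₂
      push_cast at ih₂ hcoef ⊢
      linear_combination (d + 1) * x * ih₁ + (x - (d + 1)) * ih₂ +
        (d + 1) * d.factorial * x ^ n * gapSum (fun k => 1 - k / x) (d + 1) n * hcoef

theorem stmt14_general (d n : ℕ) (hd : 1 ≤ d) (x : ℝ) (hx : (d : ℝ) ≤ x) :
    ((d.factorial : ℝ) / x ^ d) * ∑ j ∈ incSeqs d n,
        ∏ r : Fin d, (1 - ((d : ℝ) - (r : ℕ)) / x) ^ (j r.succ - j r.castSucc - 1) =
      (1 / x ^ n) * ∑ r ∈ Finset.range (d + 1),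
        (-1 : ℝ) ^ r * (d.choose r) * (x - r) ^ n := by
  have hx0 : x ≠ 0 := (lt_of_lt_of_le (by exact_mod_cast hd) hx).ne'
  have hsum : ∑ j ∈ incSeqs d n,
      ∏ r : Fin d, (1 - ((d : ℝ) - (r : ℕ)) / x) ^ (j r.succ - j r.castSucc - 1) =
        gapSum (fun k => 1 - k / x) d n := by
    refine sum_congr rfl fun j _ => prod_congr rfl fun r _ => ?_
    show _ = (1 - ((d - r : ℕ) : ℝ) / x) ^ gap j r
    rw [Nat.cast_sub r.is_lt.le]
    rfl
  rw [hsum, ← altChooseSum, div_mul_eq_mul_div, one_div_mul_eq_div,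
    div_eq_div_iff (pow_ne_zero _ hx0) (pow_ne_zero _ hx0)]
  linear_combination factorial_mul_pow_mul_gapSum hx0 d n

theorem stmt14 (d n : ℕ) (hd : 1 ≤ d) (hdn : d ≤ n) (x : ℝ) (hx : (d : ℝ) ≤ x) :
    ((d.factorial : ℝ) / x ^ d) * ∑ j ∈ incSeqs d n,
        ∏ r : Fin d, (1 - ((d : ℝ) - (r : ℕ)) / x) ^ (j r.succ - j r.castSucc - 1) =
      (1 / x ^ n) * ∑ r ∈ Finset.range (d + 1),
        (-1 : ℝ) ^ r * (d.choose r) * (x - r) ^ n :=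
  stmt14_general d n hd x hx
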